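/- Let g be odd, sign-preserving, and monotonically nondecreasing, W symmetric nonnegative, and f_i(x) = γ_i x² + β_i x + α_i with γ_i > 0. Suppose x* satisfies f_i'(x_i*) = f_j'(x_j*) for all i,j and ∑_i x_i* = P. Then along the dynamics ẋ_i = −c ∑_j W_{ij} g(f_i'(x_i) − f_j'(x_j)) with c > 0 started from ∑_i x_i(0) = P, the residual cost F̄(x) = ∑_i f_i(x_i) − ∑_i f_i(x_i*) is nonnegative on the feasible hyperplane and nonincreasing in time. -/

import Mathlib

/-!
On the hyperplane `∑ yᵢ = P` the tangent lines of the convex costs at `x*` all have the same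
slope `f'ᵢ(x*ᵢ)`, so the sum of the linear parts vanishes there and `x*` is a minimiser. Along the flow, `d/dt ∑ fᵢ(xᵢ) = -c ∑ᵢ aᵢ ∑ⱼ Wᵢⱼ g(aᵢ - aⱼ)` with
`aᵢ = f'ᵢ(xᵢ)`; symmetrising with `W` symmetric and `g` odd turns the double sum into
`½ ∑ᵢⱼ Wᵢⱼ (aᵢ - aⱼ) g(aᵢ - aⱼ) ≥ 0`.
-/

open Finset

theorem hasDerivAt_quadratic (γ β α y : ℝ) :
    HasDerivAt (fun y => γ * y ^ 2 + β * y + α) (2 * γ * y + β) y := by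
  have h := (((hasDerivAt_pow 2 y).const_mul γ).add ((hasDerivAt_id' y).const_mul β)).add_const α
  exact h.congr_deriv (by push_cast; ring)

theorem quadratic_add_mul_sub_le {γ : ℝ} (hγ : 0 ≤ γ) (β α x y : ℝ) :
    γ * x ^ 2 + β * x + α + (2 * γ * x + β) * (y - x) ≤ γ * y ^ 2 + β * y + α := by
  nlinarith [mul_nonneg hγ (sq_nonneg (y - x))]

theorem sum_le_sum_of_tangent_of_forall_eq {ι : Type*} [Fintype ι] {F : ι → ℝ → ℝ}
    {μ xstar y : ι → ℝ} (htangent : ∀ i, F i (xstar i) + μ i * (y i - xstar i) ≤ F i (y i))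
    (hμ : ∀ i j, μ i = μ j) (hsum : ∑ i, y i = ∑ i, xstar i) :
    ∑ i, F i (xstar i) ≤ ∑ i, F i (y i) := by
  have hlin : ∑ i, μ i * (y i - xstar i) = 0 := by
    rcases isEmpty_or_nonempty ι with _ | ⟨⟨i₀⟩⟩
    · simp
    · rw [sum_congr rfl fun i _ => by rw [hμ i i₀], ← mul_sum, sum_sub_distrib, hsum, sub_self,
        mul_zero]
  calc ∑ i, F i (xstar i) = ∑ i, (F i (xstar i) + μ i * (y i - xstar i)) := by
        rw [sum_add_distrib, hlin, add_zero]
    _ ≤ ∑ i, F i (y i) := sum_le_sum fun i _ => htangent i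

section Consensus

variable {ι : Type*} [Fintype ι] {W : ι → ι → ℝ} {g : ℝ → ℝ}

theorem two_mul_sum_mul_sum_eq_of_odd (hsym : ∀ i j, W i j = W j i)
    (hodd : ∀ u, g (-u) = -g u) (a : ι → ℝ) :
    2 * ∑ i, a i * ∑ j, W i j * g (a i - a j)
      = ∑ i, ∑ j, W i j * ((a i - a j) * g (a i - a j)) := by
  have hswap : ∑ i, a i * ∑ j, W i j * g (a i - a j)
      = ∑ i, ∑ j, -(a j * (W i j * g (a i - a j))) := by
    simp only [mul_sum]
    rw [sum_comm]
    refine sum_congr rfl fun i _ => sum_congr rfl fun j _ => ?_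
    rw [hsym j i, show a j - a i = -(a i - a j) by ring, hodd]
    ring
  rw [two_mul]
  nth_rewrite 2 [hswap]
  simp only [mul_sum, ← sum_add_distrib]
  exact sum_congr rfl fun i _ => sum_congr rfl fun j _ => by ring

theorem sum_mul_sum_nonneg_of_odd (hsym : ∀ i j, W i j = W j i) (hnonneg : ∀ i j, 0 ≤ W i j)
    (hodd : ∀ u, g (-u) = -g u) (hgsign : ∀ u, 0 ≤ u * g u) (a : ι → ℝ) :
    0 ≤ ∑ i, a i * ∑ j, W i j * g (a i - a j) := by
  have h := two_mul_sum_mul_sum_eq_of_odd hsym hodd a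
  have : 0 ≤ ∑ i, ∑ j, W i j * ((a i - a j) * g (a i - a j)) :=
    sum_nonneg fun i _ => sum_nonneg fun j _ => mul_nonneg (hnonneg i j) (hgsign _)
  linarith

theorem antitone_sum_of_consensus_flow (hsym : ∀ i j, W i j = W j i)
    (hnonneg : ∀ i j, 0 ≤ W i j) (hodd : ∀ u, g (-u) = -g u) (hgsign : ∀ u, 0 ≤ u * g u)
    {F F' : ι → ℝ → ℝ} (hF : ∀ i y, HasDerivAt (F i) (F' i y) y) {c : ℝ} (hc : 0 ≤ c)
    {x : ℝ → ι → ℝ}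
    (hflow : ∀ t i, HasDerivAt (fun s => x s i)
      (-c * ∑ j, W i j * g (F' i (x t i) - F' j (x t j))) t) :
    Antitone fun t => ∑ i, F i (x t i) := by
  have hderiv : ∀ t, HasDerivAt (fun t => ∑ i, F i (x t i))
      (-c * ∑ i, F' i (x t i) * ∑ j, W i j * g (F' i (x t i) - F' j (x t j))) t := by
    intro t
    rw [mul_sum]
    refine HasDerivAt.fun_sum fun i _ => ?_
    exact ((hF i (x t i)).comp t (hflow t i)).congr_deriv (by ring)
  refine antitone_of_deriv_nonpos (fun t => (hderiv t).differentiableAt) fun t => ?_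
  rw [(hderiv t).deriv]
  exact mul_nonpos_of_nonpos_of_nonneg (neg_nonpos.2 hc)
    (sum_mul_sum_nonneg_of_odd hsym hnonneg hodd hgsign _)

end Consensus

theorem stmt_15_general (n : ℕ) (W : Matrix (Fin n) (Fin n) ℝ)
    (hsym : ∀ i j, W i j = W j i) (hnonneg : ∀ i j, 0 ≤ W i j)
    (g : ℝ → ℝ) (hodd : ∀ u, g (-u) = -g u) (hgsign : ∀ u, 0 ≤ u * g u)
    (γ β α : Fin n → ℝ) (hγ : ∀ i, 0 < γ i)
    (f : Fin n → ℝ → ℝ) (hfdef : ∀ i y, f i y = γ i * y ^ 2 + β i * y + α i)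
    (f' : Fin n → ℝ → ℝ) (hf'def : ∀ i y, f' i y = 2 * γ i * y + β i)
    (P : ℝ) (xstar : Fin n → ℝ)
    (hstar1 : ∀ i j, f' i (xstar i) = f' j (xstar j))
    (hstar2 : ∑ i, xstar i = P)
    (c : ℝ) (hc : 0 < c)
    (x : ℝ → Fin n → ℝ)
    (hflow : ∀ t i, HasDerivAt (fun s => x s i)
      (-c * ∑ j, W i j * g (f' i (x t i) - f' j (x t j))) t) :
    (∀ y : Fin n → ℝ, ∑ i, y i = P →
      0 ≤ ∑ i, f i (y i) - ∑ i, f i (xstar i)) ∧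
    (∀ t s : ℝ, t ≤ s →
      ∑ i, f i (x s i) - ∑ i, f i (xstar i)
        ≤ ∑ i, f i (x t i) - ∑ i, f i (xstar i)) := by
  have hf : ∀ i y, HasDerivAt (f i) (f' i y) y := fun i y => by
    rw [funext (hfdef i), hf'def]
    exact hasDerivAt_quadratic _ _ _ _
  refine ⟨fun y hy => sub_nonneg.2 ?_, fun t s hts => sub_le_sub_right
    (antitone_sum_of_consensus_flow hsym hnonneg hodd hgsign hf hc.le hflow hts) _⟩
  refine sum_le_sum_of_tangent_of_forall_eq (fun i => ?_) hstar1 (hy.trans hstar2.symm)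
  simp only [hfdef, hf'def]
  exact quadratic_add_mul_sub_le (hγ i).le _ _ _ _

theorem stmt_15 (n : ℕ) (W : Matrix (Fin n) (Fin n) ℝ)
    (hsym : ∀ i j, W i j = W j i) (hnonneg : ∀ i j, 0 ≤ W i j)
    (g : ℝ → ℝ) (hodd : ∀ u, g (-u) = -g u) (hgsign : ∀ u, 0 ≤ u * g u)
    (hmono : Monotone g)
    (γ β α : Fin n → ℝ) (hγ : ∀ i, 0 < γ i)
    (f : Fin n → ℝ → ℝ) (hfdef : ∀ i y, f i y = γ i * y ^ 2 + β i * y + α i)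
    (f' : Fin n → ℝ → ℝ) (hf'def : ∀ i y, f' i y = 2 * γ i * y + β i)
    (P : ℝ) (xstar : Fin n → ℝ)
    (hstar1 : ∀ i j, f' i (xstar i) = f' j (xstar j))
    (hstar2 : ∑ i, xstar i = P)
    (c : ℝ) (hc : 0 < c)
    (x : ℝ → Fin n → ℝ)
    (hflow : ∀ t i, HasDerivAt (fun s => x s i)
      (-c * ∑ j, W i j * g (f' i (x t i) - f' j (x t j))) t)
    (hinit : ∑ i, x 0 i = P) :
    (∀ y : Fin n → ℝ, ∑ i, y i = P →
      0 ≤ ∑ i, f i (y i) - ∑ i, f i (xstar i)) ∧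
    (∀ t s : ℝ, t ≤ s →
      ∑ i, f i (x s i) - ∑ i, f i (xstar i)
        ≤ ∑ i, f i (x t i) - ∑ i, f i (xstar i)) :=
  stmt_15_general n W hsym hnonneg g hodd hgsign γ β α hγ f hfdef f' hf'def P xstar hstar1 hstar2 c
    hc x hflow
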